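/- Let X be a space of cardinality less than 𝔟 and let 𝒦 be a family of subsets of X closed under finite unions. If X is absolutely star-σ𝒦, then X satisfies selectively SS*_𝒦(O,Γ): for each sequence (Uₙ) of open covers and each sequence (Dₙ) of dense subsets there are Kₙ ∈ 𝒦 with Kₙ ⊆ Dₙ such that every x ∈ X lies in St(Kₙ,Uₙ) for all but finitely many n. -/

import Mathlib

open Set Filter

variable {X : Type u}

def star {X : Type u} (A : Set X) (U : Set (Set X)) : Set X :=
  ⋃₀ {u ∈ U | (u ∩ A).Nonempty}

def IsOpenCover {X : Type u} [TopologicalSpace X] (U : Set (Set X)) : Prop :=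
  (∀ u ∈ U, IsOpen u) ∧ ⋃₀ U = univ

noncomputable def domNum : Cardinal :=
  sInf {c | ∃ D : Set (ℕ → ℕ), Cardinal.mk D = c ∧
    ∀ f : ℕ → ℕ, ∃ g ∈ D, ∀ᶠ n in atTop, f n ≤ g n}

noncomputable def boundNum : Cardinal :=
  sInf {c | ∃ B : Set (ℕ → ℕ), Cardinal.mk B = c ∧
    ¬ ∃ g : ℕ → ℕ, ∀ f ∈ B, ∀ᶠ n in atTop, f n ≤ g n}

noncomputable def covMeager : Cardinal :=
  sInf {c | ∃ F : Set (ℕ → ℕ), Cardinal.mk F = c ∧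
    ¬ ∃ g : ℕ → ℕ, ∀ f ∈ F, {n | g n = f n}.Infinite}

def StronglyStarLindelof (X : Type u) [TopologicalSpace X] : Prop :=
  ∀ U : Set (Set X), IsOpenCover U →
    ∃ C : Set X, C.Countable ∧ star C U = univ

def AbsStronglyStarLindelof (X : Type u) [TopologicalSpace X] : Prop :=
  ∀ U : Set (Set X), IsOpenCover U → ∀ D : Set X, Dense D →
    ∃ C : Set X, C ⊆ D ∧ C.Countable ∧ star C U = univ

def StronglyStarMenger (X : Type u) [TopologicalSpace X] : Prop :=
  ∀ U : ℕ → Set (Set X), (∀ n, IsOpenCover (U n)) →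
    ∃ F : ℕ → Finset X, ⋃ n, star (↑(F n)) (U n) = univ

def AbsStronglyStarMenger (X : Type u) [TopologicalSpace X] : Prop :=
  ∀ U : ℕ → Set (Set X), (∀ n, IsOpenCover (U n)) → ∀ D : Set X, Dense D →
    ∃ F : ℕ → Finset X, (∀ n, ↑(F n) ⊆ D) ∧ ⋃ n, star (↑(F n)) (U n) = univ

def SelStronglyStarMenger (X : Type u) [TopologicalSpace X] : Prop :=
  ∀ U : ℕ → Set (Set X), (∀ n, IsOpenCover (U n)) →
    ∀ D : ℕ → Set X, (∀ n, Dense (D n)) →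
      ∃ F : ℕ → Finset X, (∀ n, ↑(F n) ⊆ D n) ∧ ⋃ n, star (↑(F n)) (U n) = univ

def StronglyStarHurewicz (X : Type u) [TopologicalSpace X] : Prop :=
  ∀ U : ℕ → Set (Set X), (∀ n, IsOpenCover (U n)) →
    ∃ F : ℕ → Finset X, ∀ x : X, ∀ᶠ n in atTop, x ∈ star (↑(F n)) (U n)

def SelStronglyStarHurewicz (X : Type u) [TopologicalSpace X] : Prop :=
  ∀ U : ℕ → Set (Set X), (∀ n, IsOpenCover (U n)) →
    ∀ D : ℕ → Set X, (∀ n, Dense (D n)) →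
      ∃ F : ℕ → Finset X, (∀ n, ↑(F n) ⊆ D n) ∧
        ∀ x : X, ∀ᶠ n in atTop, x ∈ star (↑(F n)) (U n)

def StronglyStarRothberger (X : Type u) [TopologicalSpace X] : Prop :=
  ∀ U : ℕ → Set (Set X), (∀ n, IsOpenCover (U n)) →
    ∃ x : ℕ → X, ⋃ n, star {x n} (U n) = univ

def SelStronglyStarRothberger (X : Type u) [TopologicalSpace X] : Prop :=
  ∀ U : ℕ → Set (Set X), (∀ n, IsOpenCover (U n)) →
    ∀ D : ℕ → Set X, (∀ n, Dense (D n)) →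
      ∃ d : ℕ → X, (∀ n, d n ∈ D n) ∧ ⋃ n, star {d n} (U n) = univ

def DiscreteIn {X : Type u} [TopologicalSpace X] (C : Set X) : Prop :=
  ∀ x ∈ C, ∃ O : Set X, IsOpen O ∧ O ∩ C = {x}

def CountableExtent (X : Type u) [TopologicalSpace X] : Prop :=
  ∀ C : Set X, IsClosed C → DiscreteIn C → C.Countable

def SelSScdOGamma (X : Type u) [TopologicalSpace X] : Prop :=
  ∀ U : ℕ → Set (Set X), (∀ n, IsOpenCover (U n)) →
    ∀ D : ℕ → Set X, (∀ n, Dense (D n)) →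
      ∃ C : ℕ → Set X, (∀ n, C n ⊆ D n ∧ IsClosed (C n) ∧ DiscreteIn (C n)) ∧
        ∀ x : X, ∀ᶠ n in atTop, x ∈ star (C n) (U n)

def SelSScdOO (X : Type u) [TopologicalSpace X] : Prop :=
  ∀ U : ℕ → Set (Set X), (∀ n, IsOpenCover (U n)) →
    ∀ D : ℕ → Set X, (∀ n, Dense (D n)) →
      ∃ C : ℕ → Set X, (∀ n, C n ⊆ D n ∧ IsClosed (C n) ∧ DiscreteIn (C n)) ∧
        ⋃ n, star (C n) (U n) = univ

def StarSigmaK (X : Type u) [TopologicalSpace X] (K : Set (Set X)) : Prop :=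
  ∀ U : Set (Set X), IsOpenCover U →
    ∃ E : ℕ → Set X, (∀ m, E m ∈ K) ∧ star (⋃ m, E m) U = univ

def AbsStarSigmaK (X : Type u) [TopologicalSpace X] (K : Set (Set X)) : Prop :=
  ∀ D : Set X, Dense D → ∀ U : Set (Set X), IsOpenCover U →
    ∃ E : ℕ → Set X, (∀ m, E m ∈ K ∧ E m ⊆ D) ∧ star (⋃ m, E m) U = univ

def AbsNbhdStarMenger (X : Type u) [TopologicalSpace X] : Prop :=
  ∀ U : ℕ → Set (Set X), (∀ n, IsOpenCover (U n)) → ∀ D : Set X, Dense D →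
    ∃ F : ℕ → Finset X, (∀ n, ↑(F n) ⊆ D) ∧
      ∀ O : ℕ → Set X, (∀ n, IsOpen (O n) ∧ ↑(F n) ⊆ O n) →
        ⋃ n, star (O n) (U n) = univ

def AbsNbhdStarHurewicz (X : Type u) [TopologicalSpace X] : Prop :=
  ∀ U : ℕ → Set (Set X), (∀ n, IsOpenCover (U n)) → ∀ D : Set X, Dense D →
    ∃ F : ℕ → Finset X, (∀ n, ↑(F n) ⊆ D) ∧
      ∀ O : ℕ → Set X, (∀ n, IsOpen (O n) ∧ ↑(F n) ⊆ O n) →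
        ∀ x : X, ∀ᶠ n in atTop, x ∈ star (O n) (U n)


/-! Choose, for each `n`, a sequence `E n m ∈ 𝒦` inside `D n` whose union stars `U n` onto `X`, and
let `f x n` be some `m` with `x ∈ St(E n m, U n)`. Fewer than `𝔟` functions `f x` are
dominated by a single `g`, so the finite unions `⋃_{m ≤ g n} E n m ∈ 𝒦` work. -/

lemma star_mono {X : Type u} {A B : Set X} (h : A ⊆ B) (U : Set (Set X)) :
    star A U ⊆ star B U := by
  rintro x ⟨u, ⟨hu, y, hyu, hyA⟩, hxu⟩
  exact ⟨u, ⟨hu, y, hyu, h hyA⟩, hxu⟩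

lemma mem_star_iUnion {X : Type u} {ι : Sort*} {A : ι → Set X} {U : Set (Set X)} {x : X} :
    x ∈ star (⋃ i, A i) U ↔ ∃ i, x ∈ star (A i) U := by
  constructor
  · rintro ⟨u, ⟨hu, y, hyu, hyA⟩, hxu⟩
    obtain ⟨i, hi⟩ := mem_iUnion.mp hyA
    exact ⟨i, u, ⟨hu, y, hyu, hi⟩, hxu⟩
  · rintro ⟨i, hx⟩
    exact star_mono (subset_iUnion A i) U hx

lemma accumulate_mem_of_union_mem {α : Type*} {K : Set (Set α)}
    (hK : ∀ A ∈ K, ∀ B ∈ K, A ∪ B ∈ K) {E : ℕ → Set α} (hE : ∀ m, E m ∈ K) (n : ℕ) :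
    accumulate E n ∈ K := by
  induction n with
  | zero => simpa using hE 0
  | succ n ih => rw [accumulate_succ]; exact hK _ ih _ (hE _)

lemma boundNum_le_mk_of_not_bounded {B : Set (ℕ → ℕ)}
    (hB : ¬ ∃ g : ℕ → ℕ, ∀ f ∈ B, ∀ᶠ n in atTop, f n ≤ g n) :
    boundNum ≤ Cardinal.mk B :=
  csInf_le' ⟨B, rfl, hB⟩

lemma exists_eventually_le_of_mk_lt_boundNum {ι : Type v} (f : ι → ℕ → ℕ)
    (hcard : Cardinal.mk ι < Cardinal.lift.{v} boundNum) :
    ∃ g : ℕ → ℕ, ∀ i, ∀ᶠ n in atTop, f i n ≤ g n := by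
  by_contra hf
  have hrange : ¬ ∃ g : ℕ → ℕ, ∀ h ∈ range f, ∀ᶠ n in atTop, h n ≤ g n := by
    simpa only [forall_mem_range] using hf
  have := calc Cardinal.lift.{v} boundNum
      ≤ Cardinal.lift.{v} (Cardinal.mk (range f)) :=
        Cardinal.lift_le.mpr (boundNum_le_mk_of_not_bounded hrange)
    _ ≤ Cardinal.lift.{0} (Cardinal.mk ι) := Cardinal.mk_range_le_lift
    _ = Cardinal.mk ι := Cardinal.lift_uzero _
  exact (this.trans_lt hcard).false

theorem stmt6 {X : Type u} [TopologicalSpace X] (K : Set (Set X))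
    (hK : ∀ A ∈ K, ∀ B ∈ K, A ∪ B ∈ K)
    (hcard : Cardinal.mk X < Cardinal.lift.{u} boundNum) (hstar : AbsStarSigmaK X K) :
    ∀ U : ℕ → Set (Set X), (∀ n, IsOpenCover (U n)) →
      ∀ D : ℕ → Set X, (∀ n, Dense (D n)) →
        ∃ Ks : ℕ → Set X, (∀ n, Ks n ∈ K ∧ Ks n ⊆ D n) ∧
          ∀ x : X, ∀ᶠ n in atTop, x ∈ star (Ks n) (U n) := by
  intro U hU D hD
  choose E hE hEstar using fun n => hstar (D n) (hD n) (U n) (hU n)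
  have hcover : ∀ x n, ∃ m, x ∈ star (E n m) (U n) := fun x n =>
    mem_star_iUnion.mp (hEstar n ▸ mem_univ x)
  choose f hf using hcover
  obtain ⟨g, hg⟩ := exists_eventually_le_of_mk_lt_boundNum f hcard
  refine ⟨fun n => accumulate (E n) (g n), fun n => ⟨?_, ?_⟩, fun x => ?_⟩
  · exact accumulate_mem_of_union_mem hK (fun m => (hE n m).1) (g n)
  · exact (accumulate_subset_iUnion _).trans (iUnion_subset fun m => (hE n m).2)
  · filter_upwards [hg x] with n hn
    exact star_mono (subset_accumulate.trans (accumulate_subset_accumulate hn)) _ (hf x n)
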